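/- The NADS (Σ, g_{1,∞}) is topologically mixing: for every pair of nonempty open sets U, V ⊆ Σ there exists N ≥ 0 such that g_1^{(n)}(U) ∩ V ≠ ∅ for all n ≥ N. -/
import Mathlib


/-- The symbolic space `Σ = {0,1}^ℕ`; here `x : BinSeq` is 0-indexed, so `x n`
represents the symbol `x_{n+1}` of the paper. -/
abbrev BinSeq : Type := ℕ → Bool

/-- The shift map `σ(x₁x₂x₃⋯) = x₂x₃⋯`. -/
def shift (x : BinSeq) : BinSeq := fun n => x (n + 1)

/-- The metric `d(x,y) = Σ_{n≥1} |x_n − y_n| / 2^n` on `Σ` (with our 0-indexing, symbol `n`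
contributes `1/2^{n+1}`). -/
noncomputable def dS (x y : BinSeq) : ℝ :=
  ∑' n : ℕ, (if x n = y n then (0 : ℝ) else 1) / 2 ^ (n + 1)

/-- `tm n` is the Thue–Morse symbol `ξ_{n+1}`: the parity of the number of ones in the
binary expansion of `n` (i.e. of `(n+1) − 1`); `true` encodes `1` and `false` encodes `0`. -/
def tm (n : ℕ) : Bool := (Nat.digits 2 n).sum % 2 == 1

/-- `g i` is the map `g_{i+1}` of the NADS: `σ` if `ξ_{i+1} = 0` and `σ²` if `ξ_{i+1} = 1`. -/
def g (i : ℕ) : BinSeq → BinSeq := if tm i then shift ∘ shift else shift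

/-- `gComp n = g_1^{(n)} = g_n ∘ g_{n-1} ∘ ⋯ ∘ g_1`. -/
def gComp : ℕ → BinSeq → BinSeq
  | 0 => id
  | n + 1 => g n ∘ gComp n

/-- A set `U ⊆ Σ` is open for the metric `d`. -/
def IsOpenS (U : Set BinSeq) : Prop :=
  ∀ x ∈ U, ∃ ε : ℝ, 0 < ε ∧ ∀ y : BinSeq, dS x y < ε → y ∈ U

/-- `x` is a periodic point of the NADS `g_{1,∞}`: there is `n ≥ 1` with
`g_1^{(nk)}(x) = x` for all `k ≥ 0`. -/
def IsGPeriodicPt (x : BinSeq) : Prop :=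
  ∃ n : ℕ, 1 ≤ n ∧ ∀ k : ℕ, gComp (n * k) x = x

/-- The orbit `orb(x, g_{1,∞}) = {g_1^{(n)}(x) : n ≥ 0}`. -/
def gOrbit (x : BinSeq) : Set BinSeq :=
  Set.range fun n : ℕ => gComp n x


lemma dS_summable (x y : BinSeq) :
    Summable (fun n : ℕ => (if x n = y n then (0 : ℝ) else 1) / 2 ^ (n + 1)) := by
  refine Summable.of_nonneg_of_le (fun n => by positivity) (fun n => ?_)
    ((summable_geometric_of_lt_one (by norm_num : (0:ℝ) ≤ 2⁻¹)
      (by norm_num)).comp_injective (add_left_injective 1))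
  rw [div_eq_mul_inv, ← inv_pow]
  split <;> simp [le_refl]

lemma tsum_tail : ∑' n : ℕ, ((2 : ℝ)⁻¹) ^ (n + 1) = 1 := by
  have h : ∑' n : ℕ, ((2 : ℝ)⁻¹) ^ (n + 1) = ∑' n : ℕ, (2 : ℝ)⁻¹ ^ n * (2 : ℝ)⁻¹ := by
    apply tsum_congr; intro n; ring
  rw [h, tsum_mul_right, tsum_geometric_of_lt_one (by norm_num) (by norm_num)]
  norm_num

lemma dS_le (x y : BinSeq) (m : ℕ) (h : ∀ k < m, x k = y k) :
    dS x y ≤ (2 : ℝ)⁻¹ ^ m := by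
  set f : ℕ → ℝ := fun n => (if x n = y n then (0 : ℝ) else 1) / 2 ^ (n + 1) with hf
  have hs := dS_summable x y
  have hnn : ∀ n, 0 ≤ f n := by intro n; simp only [hf]; positivity
  have h1 : dS x y = ∑ i ∈ Finset.range m, f i + ∑' n, f (n + m) :=
    (Summable.sum_add_tsum_nat_add m hs).symm
  have h2 : ∑ i ∈ Finset.range m, f i = 0 := by
    apply Finset.sum_eq_zero
    intro i hi
    simp [hf, h i (Finset.mem_range.mp hi)]
  have h3 : ∑' n, f (n + m) ≤ ∑' n : ℕ, (2 : ℝ)⁻¹ ^ m * (2 : ℝ)⁻¹ ^ (n + 1) := by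
    apply Summable.tsum_le_tsum
    · intro n
      have : f (n + m) ≤ (2 : ℝ)⁻¹ ^ (n + m + 1) := by
        simp only [hf, div_eq_mul_inv, ← inv_pow]
        split <;> simp [le_refl, pow_nonneg]
      refine this.trans (le_of_eq ?_)
      rw [← pow_add]; ring_nf
    · exact hs.comp_injective (add_left_injective m)
    · exact (Summable.mul_left _ ((summable_geometric_of_lt_one (by norm_num)
        (by norm_num)).comp_injective (add_left_injective 1)))
  rw [h1, h2, zero_add]
  calc ∑' n, f (n + m) ≤ _ := h3
    _ = (2 : ℝ)⁻¹ ^ m := by rw [tsum_mul_left, tsum_tail, mul_one]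

lemma gComp_shift (n : ℕ) : ∃ c : ℕ, n ≤ c ∧ ∀ x : BinSeq, gComp n x = fun k => x (k + c) := by
  induction n with
  | zero => exact ⟨0, le_refl 0, fun x => rfl⟩
  | succ n ih =>
    obtain ⟨c, hc, hx⟩ := ih
    unfold gComp g
    by_cases h : tm n
    · refine ⟨c + 2, by omega, fun x => ?_⟩
      simp only [h, if_pos, Function.comp_apply, hx x]
      funext k; simp [shift]; ring_nf
    · refine ⟨c + 1, by omega, fun x => ?_⟩
      simp only [h, if_neg, Function.comp_apply, hx x, if_false]
      funext k; simp [shift]; ring_nf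


/-- The NADS `(Σ, g_{1,∞})` is topologically mixing. -/
theorem gNads_topologically_mixing :
    ∀ U V : Set BinSeq, IsOpenS U → IsOpenS V → U.Nonempty → V.Nonempty →
      ∃ N : ℕ, ∀ n : ℕ, N ≤ n → (gComp n '' U ∩ V).Nonempty := by
  intro U V hU hV ⟨x, hx⟩ ⟨v, hv⟩
  obtain ⟨ε, hε, hball⟩ := hU x hx
  obtain ⟨m, hm⟩ := exists_pow_lt_of_lt_one hε (by norm_num : (2 : ℝ)⁻¹ < 1)
  refine ⟨m, fun n hn => ?_⟩
  obtain ⟨c, hc, hgc⟩ := gComp_shift n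
  have hmc : m ≤ c := hn.trans hc
  set z : BinSeq := fun k => if k < c then x k else v (k - c) with hz
  have hzU : z ∈ U := by
    apply hball
    calc dS x z ≤ (2 : ℝ)⁻¹ ^ m := by
          apply dS_le
          intro k hk
          simp [hz, if_pos (lt_of_lt_of_le hk hmc)]
      _ < ε := hm
  have hzv : gComp n z = v := by
    rw [hgc z]
    funext k
    simp [hz, Nat.not_lt.mpr (Nat.le_add_left c k)]
  exact ⟨v, ⟨z, hzU, hzv⟩, hv⟩
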